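/- Let τ > 0, n₀ > 1 constant, D bounded. Define 𝒜_{τ,0} and 𝔸_{τ,0} on H²₀(D) as above with coefficient n₀, and let ℒ_τ : H²₀(D) → H²₀(D) be the solution map defined variationally by (𝔸_{τ,0}ℒ_τu, φ)_{H²₀} = ((1/(n₀−1))u_τ, Δφ)_{L²} + ((1/(n₀−1))Δu_τ, φ)_{L²} + 2τ((1/(n₀−1)+1)u_τ, φ)_{L²}, where u_τ = 𝔸_{τ,0}^{-1}u. Then the map τ ↦ 𝔸_{τ,0}^{-1} is Fréchet differentiable in operator norm on ℒ(H²₀(D)), with derivative −ℒ_τ; i.e. ‖𝔸_{τ+h,0}^{-1} − 𝔸_{τ,0}^{-1} + hℒ_τ‖_{ℒ(H²₀(D))} = O(h²). -/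

import Mathlib

open MeasureTheory Filter
noncomputable section

abbrev Euc (d : ℕ) := EuclideanSpace ℝ (Fin d)

variable {d : ℕ}

/-- partial derivative in direction `i` -/
def pd (i : Fin d) (f : Euc d → ℝ) (x : Euc d) : ℝ := fderiv ℝ f x (EuclideanSpace.single i 1)

/-- Laplacian -/
def lap (f : Euc d → ℝ) (x : Euc d) : ℝ := ∑ i, pd i (pd i f) x

/-- membership in H²₀(D): (surrogate) C² and vanishing outside D, so that the
    extension by zero has zero Cauchy data on ∂D. -/
def MemH20 (D : Set (Euc d)) (u : Euc d → ℝ) : Prop :=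
  ContDiff ℝ 2 u ∧ ∀ x ∉ D, u x = 0

/-- L²(D) norm -/
def l2 (D : Set (Euc d)) (f : Euc d → ℝ) : ℝ := Real.sqrt (∫ x in D, (f x)^2)

/-- H²₀(D) norm ‖Δu‖_{L²(D)} -/
def h20norm (D : Set (Euc d)) (u : Euc d → ℝ) : ℝ := l2 D (lap u)

/-- full Hᵏ(D) norm -/
def hk (k : ℕ) (D : Set (Euc d)) (u : Euc d → ℝ) : ℝ :=
  Real.sqrt (∫ x in D, ∑ j ∈ Finset.range (k+1), ‖iteratedFDeriv ℝ j u x‖^2)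

/-- Y-periodicity with period cell [0,1]^d -/
def Per (f : Euc d → ℝ) : Prop := ∀ x i, f (x + EuclideanSpace.single i 1) = f x

/-- the unit cell Y=[0,1]^d -/
def cell (d : ℕ) : Set (Euc d) := {x | ∀ i, x i ∈ Set.Icc (0:ℝ) 1}

/-- the form 𝒜_{τ,0}(u,φ) with constant coefficient n₀ -/
def formA0 (D : Set (Euc d)) (n₀ τ : ℝ) (u φ : Euc d → ℝ) : ℝ :=
  (∫ x in D, (1/(n₀ - 1)) * (lap u x + τ * u x) * (lap φ x + τ * φ x))
    + τ^2 * (∫ x in D, u x * φ x)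

/-- uτ = 𝔸_{τ,0}⁻¹u: the Riesz solution of 𝒜_{τ,0}(uτ,φ) = (Δu,Δφ)_{L²} ∀φ ∈ H²₀(D) -/
def RieszSol (D : Set (Euc d)) (n₀ τ : ℝ) (uτ u : Euc d → ℝ) : Prop :=
  MemH20 D uτ ∧ ∀ φ, MemH20 D φ →
    formA0 D n₀ τ uτ φ = ∫ x in D, lap u x * lap φ x

/-- Lu = ℒ_τu: the variational solution of
    (𝔸_{τ,0}ℒ_τu, φ)_{H²₀} = ((1/(n₀−1))uτ, Δφ) + ((1/(n₀−1))Δuτ, φ) + 2τ((1/(n₀−1)+1)uτ, φ) -/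
def LSol (D : Set (Euc d)) (n₀ τ : ℝ) (Lu uτ : Euc d → ℝ) : Prop :=
  MemH20 D Lu ∧ ∀ φ, MemH20 D φ →
    formA0 D n₀ τ Lu φ =
      (∫ x in D, (1/(n₀ - 1)) * uτ x * lap φ x)
        + (∫ x in D, (1/(n₀ - 1)) * lap uτ x * φ x)
        + 2*τ * (∫ x in D, ((1/(n₀ - 1)) + 1) * uτ x * φ x)

section helpers
lemma pd_contDiff {f : Euc d → ℝ} (hf : ContDiff ℝ 2 f) (i : Fin d) :
    ContDiff ℝ 1 (pd i f) := (hf.fderiv_right (m := 1) (by norm_num)).clm_apply contDiff_const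

lemma lap_continuous {f : Euc d → ℝ} (hf : ContDiff ℝ 2 f) : Continuous (lap f) := by
  apply continuous_finset_sum
  intro i _
  exact ((((pd_contDiff hf i).fderiv_right (m := 0) (by norm_num)).clm_apply
    contDiff_const)).continuous

lemma pd_comb {f g k : Euc d → ℝ} (hf : Differentiable ℝ f) (hg : Differentiable ℝ g)
    (hk : Differentiable ℝ k) (a b c : ℝ) (i : Fin d) :
    pd i (fun x => a * f x + b * g x + c * k x)
      = fun x => a * pd i f x + b * pd i g x + c * pd i k x := by
  funext x
  unfold pd
  rw [fderiv_fun_add (((hf x).const_mul a).fun_add ((hg x).const_mul b)) ((hk x).const_mul c),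
    fderiv_fun_add ((hf x).const_mul a) ((hg x).const_mul b),
    fderiv_const_mul (hf x), fderiv_const_mul (hg x), fderiv_const_mul (hk x)]
  simp

lemma lap_comb {f g k : Euc d → ℝ} (hf : ContDiff ℝ 2 f) (hg : ContDiff ℝ 2 g)
    (hk : ContDiff ℝ 2 k) (a b c : ℝ) :
    lap (fun x => a * f x + b * g x + c * k x)
      = fun x => a * lap f x + b * lap g x + c * lap k x := by
  funext x
  unfold lap
  rw [Finset.mul_sum, Finset.mul_sum, Finset.mul_sum, ← Finset.sum_add_distrib,
    ← Finset.sum_add_distrib]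
  apply Finset.sum_congr rfl
  intro i _
  rw [pd_comb (hf.differentiable (by norm_num)) (hg.differentiable (by norm_num))
    (hk.differentiable (by norm_num)),
    pd_comb ((pd_contDiff hf i).differentiable one_ne_zero)
      ((pd_contDiff hg i).differentiable one_ne_zero) ((pd_contDiff hk i).differentiable one_ne_zero)]

lemma memH20_comb {D : Set (Euc d)} {f g k : Euc d → ℝ} (hf : MemH20 D f) (hg : MemH20 D g)
    (hk : MemH20 D k) (a b c : ℝ) : MemH20 D (fun x => a * f x + b * g x + c * k x) := by
  refine ⟨((contDiff_const.mul hf.1).add (contDiff_const.mul hg.1)).add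
    (contDiff_const.mul hk.1), fun x hx => ?_⟩
  simp [hf.2 x hx, hg.2 x hx, hk.2 x hx]

lemma intgD {D : Set (Euc d)} (hDb : Bornology.IsBounded D) {f : Euc d → ℝ}
    (hf : Continuous f) : IntegrableOn f D :=
  (hf.continuousOn.integrableOn_compact hDb.isCompact_closure).mono_set subset_closure

lemma isplit {D : Set (Euc d)} {f g : Euc d → ℝ} (hf : IntegrableOn f D) (hg : IntegrableOn g D) :
    (∫ x in D, (f x + g x)) = (∫ x in D, f x) + ∫ x in D, g x := integral_add hf hg

lemma pull {D : Set (Euc d)} (c : ℝ) (f g : Euc d → ℝ) :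
    (∫ x in D, c * f x * g x) = c * ∫ x in D, f x * g x := by
  rw [← integral_const_mul]
  exact integral_congr_ae (.of_forall fun x => by ring)

lemma cs {D : Set (Euc d)} (hDb : Bornology.IsBounded D) {f g : Euc d → ℝ}
    (hf : Continuous f) (hg : Continuous g) :
    |∫ x in D, f x * g x| ≤ Real.sqrt (∫ x in D, f x ^ 2) * Real.sqrt (∫ x in D, g x ^ 2) := by
  set A := ∫ x in D, f x ^ 2 with hA
  set B := ∫ x in D, g x ^ 2 with hB
  set C := ∫ x in D, f x * g x with hC
  have hAnn : 0 ≤ A := integral_nonneg fun x => sq_nonneg _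
  have hBnn : 0 ≤ B := integral_nonneg fun x => sq_nonneg _
  have i1 : IntegrableOn (fun x => f x ^ 2) D := intgD hDb (hf.pow 2)
  have i1' : IntegrableOn (fun x => g x ^ 2) D := intgD hDb (hg.pow 2)
  have key : ∀ t : ℝ, 0 ≤ A + 2 * t * C + t ^ 2 * B := by
    intro t
    have i2 : IntegrableOn (fun x => 2 * t * (f x * g x)) D := (intgD hDb (hf.mul hg)).const_mul _
    have i3 : IntegrableOn (fun x => t ^ 2 * g x ^ 2) D := i1'.const_mul _
    have i12 : IntegrableOn (fun x => f x ^ 2 + 2 * t * (f x * g x)) D := i1.add i2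
    have h1 : 0 ≤ ∫ x in D, (f x + t * g x) ^ 2 := integral_nonneg fun x => sq_nonneg _
    have h2 : (∫ x in D, (f x + t * g x) ^ 2) = A + 2 * t * C + t ^ 2 * B := by
      have e : ∀ x : Euc d, (f x + t * g x) ^ 2
          = f x ^ 2 + 2 * t * (f x * g x) + t ^ 2 * g x ^ 2 := fun x => by ring
      rw [integral_congr_ae (.of_forall e), isplit i12 i3, isplit i1 i2,
        integral_const_mul, integral_const_mul]
    linarith [h1.trans_eq h2]
  have hC2 : C ^ 2 ≤ A * B := by
    rcases eq_or_lt_of_le hBnn with hB0 | hB0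
    · rcases eq_or_ne C 0 with hC0 | hC0
      · rw [hC0]; nlinarith
      · have h := key (-(A + 1) / (2 * C))
        have ht : 2 * (-(A + 1) / (2 * C)) * C = -(A + 1) := by field_simp
        rw [← hB0, ht] at h
        exfalso; nlinarith [h]
    · have h := key (-C / B)
      have e : A + 2 * (-C / B) * C + (-C / B) ^ 2 * B = A - C ^ 2 / B := by
        field_simp; ring
      rw [e] at h
      have := (div_le_iff₀ hB0).mp (by linarith : C ^ 2 / B ≤ A)
      linarith
  calc |C| = Real.sqrt (C ^ 2) := (Real.sqrt_sq_eq_abs C).symm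
    _ ≤ Real.sqrt (A * B) := Real.sqrt_le_sqrt hC2
    _ = Real.sqrt A * Real.sqrt B := Real.sqrt_mul hAnn _

lemma atom_lin {D : Set (Euc d)} (hDb : Bornology.IsBounded D) {p1 p2 p3 q : Euc d → ℝ}
    (h1 : Continuous p1) (h2 : Continuous p2) (h3 : Continuous p3) (hq : Continuous q)
    (r s t : ℝ) :
    (∫ x in D, (r * p1 x + s * p2 x + t * p3 x) * q x)
      = r * (∫ x in D, p1 x * q x) + s * (∫ x in D, p2 x * q x)
        + t * ∫ x in D, p3 x * q x := by
  have e : ∀ x : Euc d, (r * p1 x + s * p2 x + t * p3 x) * q x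
      = r * (p1 x * q x) + (s * (p2 x * q x) + t * (p3 x * q x)) := fun x => by ring
  have i1 : IntegrableOn (fun x => r * (p1 x * q x)) D := (intgD hDb (h1.mul hq)).const_mul _
  have i2 : IntegrableOn (fun x => s * (p2 x * q x)) D := (intgD hDb (h2.mul hq)).const_mul _
  have i3 : IntegrableOn (fun x => t * (p3 x * q x)) D := (intgD hDb (h3.mul hq)).const_mul _
  have i23 : IntegrableOn (fun x => s * (p2 x * q x) + t * (p3 x * q x)) D := i2.add i3
  rw [integral_congr_ae (.of_forall e), isplit i1 i23, isplit i2 i3,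
    integral_const_mul, integral_const_mul, integral_const_mul]
  ring

lemma formA0_expand {D : Set (Euc d)} (hDb : Bornology.IsBounded D) {v φ : Euc d → ℝ}
    (hv : ContDiff ℝ 2 v) (hφ : ContDiff ℝ 2 φ) (n₀ σ : ℝ) :
    formA0 D n₀ σ v φ
      = (1/(n₀-1)) * (∫ x in D, lap v x * lap φ x)
        + (1/(n₀-1)) * σ * (∫ x in D, v x * lap φ x)
        + (1/(n₀-1)) * σ * (∫ x in D, lap v x * φ x)
        + ((1/(n₀-1)) + 1) * σ^2 * (∫ x in D, v x * φ x) := by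
  have cv : Continuous v := hv.continuous
  have cφ : Continuous φ := hφ.continuous
  have clv : Continuous (lap v) := lap_continuous hv
  have clφ : Continuous (lap φ) := lap_continuous hφ
  have e : ∀ x : Euc d, (1/(n₀-1)) * (lap v x + σ * v x) * (lap φ x + σ * φ x)
      = (1/(n₀-1)) * (lap v x * lap φ x) + ((1/(n₀-1)) * σ * (v x * lap φ x)
        + ((1/(n₀-1)) * σ * (lap v x * φ x) + (1/(n₀-1)) * σ^2 * (v x * φ x))) :=
    fun x => by ring
  have i1 : IntegrableOn (fun x => (1/(n₀-1)) * (lap v x * lap φ x)) D :=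
    (intgD hDb (clv.mul clφ)).const_mul _
  have i2 : IntegrableOn (fun x => (1/(n₀-1)) * σ * (v x * lap φ x)) D :=
    (intgD hDb (cv.mul clφ)).const_mul _
  have i3 : IntegrableOn (fun x => (1/(n₀-1)) * σ * (lap v x * φ x)) D :=
    (intgD hDb (clv.mul cφ)).const_mul _
  have i4 : IntegrableOn (fun x => (1/(n₀-1)) * σ^2 * (v x * φ x)) D :=
    (intgD hDb (cv.mul cφ)).const_mul _
  have i34 : IntegrableOn (fun x => 1/(n₀-1) * σ * (lap v x * φ x)
      + 1/(n₀-1) * σ^2 * (v x * φ x)) D := i3.add i4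
  have i234 : IntegrableOn (fun x => 1/(n₀-1) * σ * (v x * lap φ x)
      + (1/(n₀-1) * σ * (lap v x * φ x) + 1/(n₀-1) * σ^2 * (v x * φ x))) D := i2.add i34
  rw [formA0, integral_congr_ae (.of_forall e), isplit i1 i234,
    isplit i2 i34, isplit i3 i4,
    integral_const_mul, integral_const_mul, integral_const_mul, integral_const_mul]
  ring

lemma quadb {x y L : ℝ} (hx : 0 ≤ x) (hy : 0 ≤ y) (hL : 0 ≤ L)
    (h : x^2 + y^2 ≤ L * (x + y)) : x + y ≤ 2 * L := by
  rcases le_or_gt (x + y) 0 with h0 | h0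
  · linarith
  · nlinarith [sq_nonneg (x - y)]

/-- coercivity: for σ ≥ τ/2, ‖Δv‖² + ‖v‖² ≤ K ⬝ formA0. -/
lemma coerc {D : Set (Euc d)} (hDb : Bornology.IsBounded D) {v : Euc d → ℝ}
    (hv : ContDiff ℝ 2 v) {n₀ τ σ : ℝ} (hn : 1 < n₀) (hτ : 0 < τ) (hσ : τ/2 ≤ σ) :
    (∫ x in D, lap v x ^ 2) + (∫ x in D, v x ^ 2)
      ≤ (2*(n₀-1) + 2 + 4/τ^2) * formA0 D n₀ σ v v := by
  have cv : Continuous v := hv.continuous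
  have clv : Continuous (lap v) := lap_continuous hv
  set P := ∫ x in D, (lap v x + σ * v x) ^ 2 with hP
  set M := ∫ x in D, v x ^ 2 with hM
  set X := ∫ x in D, lap v x ^ 2 with hX
  have hPnn : 0 ≤ P := integral_nonneg fun x => sq_nonneg _
  have hMnn : 0 ≤ M := integral_nonneg fun x => sq_nonneg _
  have hne : n₀ - 1 ≠ 0 := by intro h; rw [sub_eq_zero] at h; simp [h.symm] at hn
  have hF : formA0 D n₀ σ v v = (1/(n₀-1)) * P + σ^2 * M := by
    rw [formA0]
    congr 1
    · rw [← integral_const_mul]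
      exact integral_congr_ae (.of_forall fun x => by ring)
    · congr 1
      exact integral_congr_ae (.of_forall fun x => (pow_two (v x)).symm)
  have hXP : X ≤ 2 * P + 2 * σ^2 * M := by
    have ip : IntegrableOn (fun x => 2 * ((lap v x + σ * v x) ^ 2)) D :=
      (intgD hDb ((clv.add (continuous_const.mul cv)).pow 2)).const_mul _
    have im : IntegrableOn (fun x => 2 * σ^2 * (v x ^ 2)) D :=
      (intgD hDb (cv.pow 2)).const_mul _
    have mono : X ≤ ∫ x in D,
        (2 * ((lap v x + σ * v x) ^ 2) + 2 * σ^2 * (v x ^ 2)) := by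
      apply integral_mono (intgD hDb (clv.pow 2)) (ip.add im)
      intro x
      show lap v x ^ 2 ≤ 2 * ((lap v x + σ * v x) ^ 2) + 2 * σ^2 * (v x ^ 2)
      nlinarith [sq_nonneg (lap v x + 2 * σ * v x)]
    rw [isplit ip im, integral_const_mul, integral_const_mul] at mono
    linarith
  rw [hF]
  have ha : (0:ℝ) < 1/(n₀-1) := by
    have h0 : (0:ℝ) < n₀ - 1 := by linarith
    positivity
  have han : (1/(n₀-1)) * (n₀ - 1) = 1 := by field_simp
  have hσ2 : τ^2/4 ≤ σ^2 := by nlinarith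
  have e1 : (2*(n₀-1)) * ((1/(n₀-1)) * P) = 2 * P := by
    linear_combination (2*P) * han
  have h3 : M ≤ (4/τ^2) * (σ^2 * M) := by
    have h4 : (1:ℝ) ≤ (4/τ^2) * σ^2 := by
      rw [div_mul_eq_mul_div, le_div_iff₀ (by positivity)]
      nlinarith
    nlinarith [mul_le_mul_of_nonneg_right h4 hMnn]
  have h2 : 0 ≤ (2 + 4/τ^2) * ((1/(n₀-1)) * P) :=
    mul_nonneg (by positivity) (mul_nonneg ha.le hPnn)
  have h4 : 0 ≤ (2*(n₀-1)) * (σ^2 * M) :=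
    mul_nonneg (by linarith) (mul_nonneg (sq_nonneg σ) hMnn)
  have h5 : 0 ≤ 2 * (σ^2 * M) := mul_nonneg (by norm_num) (mul_nonneg (sq_nonneg σ) hMnn)
  nlinarith [e1, h2, h3, h4, h5, hXP]
end helpers

def CLc (a cc K τ : ℝ) : ℝ := 4*K^2*(a + 2*τ*cc)
def Cst (a cc K τ : ℝ) : ℝ :=
  2*K*(2*a*CLc a cc K τ + 2*τ*cc*CLc a cc K τ + 2*cc*K + cc*CLc a cc K τ)

lemma Cst_pos {a cc K τ : ℝ} (ha : 0 < a) (hcc : 0 < cc) (hK : 0 < K) (hτ : 0 < τ) :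
    0 < Cst a cc K τ := by unfold Cst CLc; positivity


lemma final_arith (a cc K τ Nu Sτ Nτ NL SL Nw Sw h : ℝ)
    (ha : 0 < a) (hcc : 0 < cc) (hK : 0 < K) (hτ : 0 < τ) (hNu : 0 ≤ Nu) (hSτ : 0 ≤ Sτ)
    (hNτ : 0 ≤ Nτ) (hNL : 0 ≤ NL) (hSL : 0 ≤ SL) (hNw : 0 ≤ Nw) (hSw : 0 ≤ Sw)
    (hh : |h| ≤ 1)
    (e1 : Nτ^2 + Sτ^2 ≤ K*(Nu*Nτ))
    (e2 : NL^2 + SL^2 ≤ K*(a*(Sτ*NL) + a*(Nτ*SL) + 2*τ*(cc*(Sτ*SL))))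
    (e3 : Nw^2 + Sw^2 ≤ K*(h^2*(a*(SL*Nw) + a*(NL*Sw) + 2*τ*(cc*(SL*Sw))
            + cc*(Sτ*Sw) + cc*(SL*Sw)))) :
    Nw ≤ Cst a cc K τ * h^2 * Nu := by
  have hKNu : 0 ≤ K*Nu := mul_nonneg hK.le hNu
  have q1 : Nτ + Sτ ≤ 2*(K*Nu) :=
    quadb hNτ hSτ hKNu (by linarith [e1, mul_nonneg hKNu hSτ])
  have hNτb : Nτ ≤ 2*K*Nu := by linarith
  have hSτb : Sτ ≤ 2*K*Nu := by linarith
  -- step 2 : bound for Lu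
  have m1 : a*(Sτ*NL) ≤ a*((2*K*Nu)*NL) :=
    mul_le_mul_of_nonneg_left (mul_le_mul_of_nonneg_right hSτb hNL) ha.le
  have m2 : a*(Nτ*SL) ≤ a*((2*K*Nu)*SL) :=
    mul_le_mul_of_nonneg_left (mul_le_mul_of_nonneg_right hNτb hSL) ha.le
  have m3 : 2*τ*(cc*(Sτ*SL)) ≤ 2*τ*(cc*((2*K*Nu)*SL)) :=
    mul_le_mul_of_nonneg_left
      (mul_le_mul_of_nonneg_left (mul_le_mul_of_nonneg_right hSτb hSL) hcc.le) (by linarith)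
  have L2 : 0 ≤ 2*K^2*(a+2*τ*cc)*Nu := by positivity
  have s2a : K*(a*(Sτ*NL) + a*(Nτ*SL) + 2*τ*(cc*(Sτ*SL)))
      ≤ K*(a*((2*K*Nu)*NL) + a*((2*K*Nu)*SL) + 2*τ*(cc*((2*K*Nu)*SL))) :=
    mul_le_mul_of_nonneg_left (by linarith) hK.le
  have hp : 0 ≤ τ*(cc*(K^2*(Nu*NL))) := by positivity
  have s2 : NL^2 + SL^2 ≤ (2*K^2*(a+2*τ*cc)*Nu)*(NL+SL) := by linarith
  have q2 : NL + SL ≤ 2*(2*K^2*(a+2*τ*cc)*Nu) := quadb hNL hSL L2 s2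
  have hNLb : NL ≤ 4*K^2*(a+2*τ*cc)*Nu := by linarith
  have hSLb : SL ≤ 4*K^2*(a+2*τ*cc)*Nu := by linarith
  -- step 3
  set CLv := 4*K^2*(a+2*τ*cc) with hCLv
  have hCLpos : 0 < CLv := by rw [hCLv]; positivity
  have mm1 : a*(SL*Nw) ≤ a*((CLv*Nu)*Nw) :=
    mul_le_mul_of_nonneg_left (mul_le_mul_of_nonneg_right hSLb hNw) ha.le
  have mm2 : a*(NL*Sw) ≤ a*((CLv*Nu)*Sw) :=
    mul_le_mul_of_nonneg_left (mul_le_mul_of_nonneg_right hNLb hSw) ha.le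
  have mm3 : 2*τ*(cc*(SL*Sw)) ≤ 2*τ*(cc*((CLv*Nu)*Sw)) :=
    mul_le_mul_of_nonneg_left
      (mul_le_mul_of_nonneg_left (mul_le_mul_of_nonneg_right hSLb hSw) hcc.le) (by linarith)
  have mm4 : cc*(Sτ*Sw) ≤ cc*((2*K*Nu)*Sw) :=
    mul_le_mul_of_nonneg_left (mul_le_mul_of_nonneg_right hSτb hSw) hcc.le
  have mm5 : cc*(SL*Sw) ≤ cc*((CLv*Nu)*Sw) :=
    mul_le_mul_of_nonneg_left (mul_le_mul_of_nonneg_right hSLb hSw) hcc.le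
  have s3a : K*(h^2*(a*(SL*Nw) + a*(NL*Sw) + 2*τ*(cc*(SL*Sw)) + cc*(Sτ*Sw) + cc*(SL*Sw)))
      ≤ K*(h^2*(a*((CLv*Nu)*Nw) + a*((CLv*Nu)*Sw) + 2*τ*(cc*((CLv*Nu)*Sw))
          + cc*((2*K*Nu)*Sw) + cc*((CLv*Nu)*Sw))) :=
    mul_le_mul_of_nonneg_left (mul_le_mul_of_nonneg_left (by linarith) (sq_nonneg h)) hK.le
  have hLw0 : 0 ≤ K*h^2*((2*a*CLv + 2*τ*cc*CLv + 2*cc*K + cc*CLv)*Nu) := by positivity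
  have hp1 : 0 ≤ K*(h^2*(Nu*(Nw*(a*CLv + 2*τ*cc*CLv + 2*cc*K + cc*CLv)))) := by positivity
  have hp2 : 0 ≤ K*(h^2*(Nu*(Sw*(a*CLv)))) := by positivity
  have s3 : Nw^2 + Sw^2 ≤ (K*h^2*((2*a*CLv + 2*τ*cc*CLv + 2*cc*K + cc*CLv)*Nu))*(Nw+Sw) := by
    linarith
  have q3 : Nw + Sw ≤ 2*(K*h^2*((2*a*CLv + 2*τ*cc*CLv + 2*cc*K + cc*CLv)*Nu)) :=
    quadb hNw hSw hLw0 s3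
  have hC : Cst a cc K τ = 2*K*(2*a*CLv + 2*τ*cc*CLv + 2*cc*K + cc*CLv) := by
    rw [hCLv]; rfl
  rw [hC]
  linarith [q3, hSw]
/-- τ ↦ 𝔸_{τ,0}⁻¹ is Fréchet differentiable in operator norm with
    derivative −ℒ_τ: ‖𝔸_{τ+h,0}⁻¹ − 𝔸_{τ,0}⁻¹ + hℒ_τ‖_{ℒ(H²₀(D))} = O(h²). -/
theorem stmt_16 {d : ℕ} (D : Set (Euc d)) (hD : IsOpen D) (hDb : Bornology.IsBounded D)
    (hDne : D.Nonempty) (n₀ τ : ℝ) (hn : 1 < n₀) (hτ : 0 < τ) :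
    ∃ C > 0, ∃ h₀ > 0, ∀ h : ℝ, |h| ≤ h₀ → ∀ u uτ uτh Lu : Euc d → ℝ,
      MemH20 D u → RieszSol D n₀ τ uτ u → RieszSol D n₀ (τ + h) uτh u →
      LSol D n₀ τ Lu uτ →
      h20norm D (fun x => uτh x - uτ x + h * Lu x) ≤ C * h^2 * h20norm D u := by
  have hne : (0:ℝ) < n₀ - 1 := by linarith
  have ha : (0:ℝ) < 1/(n₀-1) := by positivity
  have hcc : (0:ℝ) < (1/(n₀-1))+1 := by positivity
  have hK : (0:ℝ) < 2*(n₀-1)+2+4/τ^2 := by positivity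
  refine ⟨Cst (1/(n₀-1)) ((1/(n₀-1))+1) (2*(n₀-1)+2+4/τ^2) τ, Cst_pos ha hcc hK hτ,
    min (τ/2) 1, lt_min (by linarith) one_pos, ?_⟩
  intro h hh u uτ uτh Lu hu hR hRh hL
  have hh1 : |h| ≤ 1 := hh.trans (min_le_right _ _)
  have hhτ : |h| ≤ τ/2 := hh.trans (min_le_left _ _)
  have hhl := abs_le.mp hhτ
  have hσ' : τ/2 ≤ τ + h := by linarith [hhl.1]
  set w : Euc d → ℝ := fun x => uτh x - uτ x + h * Lu x with hw
  have hwfun : w = fun x => 1*uτh x + (-1)*uτ x + h*Lu x := by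
    rw [hw]; funext x; ring
  have hmw : MemH20 D w := by rw [hwfun]; exact memH20_comb hRh.1 hR.1 hL.1 1 (-1) h
  have hlapw : lap w = fun x => 1*lap uτh x + (-1)*lap uτ x + h*lap Lu x := by
    rw [hwfun]; exact lap_comb hRh.1.1 hR.1.1 hL.1.1 1 (-1) h
  -- continuity facts
  have clu : Continuous (lap u) := lap_continuous hu.1
  have cuτ : Continuous uτ := hR.1.1.continuous
  have cluτ : Continuous (lap uτ) := lap_continuous hR.1.1
  have cuτh : Continuous uτh := hRh.1.1.continuous
  have cluτh : Continuous (lap uτh) := lap_continuous hRh.1.1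
  have cLu : Continuous Lu := hL.1.1.continuous
  have clLu : Continuous (lap Lu) := lap_continuous hL.1.1
  have cw : Continuous w := hmw.1.continuous
  have clw : Continuous (lap w) := lap_continuous hmw.1
  -- nonnegativity of the squared integrals
  have inn : ∀ f : Euc d → ℝ, (0:ℝ) ≤ ∫ x in D, f x ^ 2 :=
    fun f => integral_nonneg fun x => sq_nonneg _
  -- ===== e1 : bound for uτ =====
  have e1 : Real.sqrt (∫ x in D, lap uτ x ^ 2) ^ 2 + Real.sqrt (∫ x in D, uτ x ^ 2) ^ 2
      ≤ (2*(n₀-1)+2+4/τ^2) * (Real.sqrt (∫ x in D, lap u x ^ 2)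
          * Real.sqrt (∫ x in D, lap uτ x ^ 2)) := by
    rw [Real.sq_sqrt (inn _), Real.sq_sqrt (inn _)]
    refine (coerc (σ := τ) hDb hR.1.1 hn hτ (by linarith)).trans (mul_le_mul_of_nonneg_left ?_ hK.le)
    rw [hR.2 uτ hR.1]
    exact (le_abs_self _).trans (cs hDb clu cluτ)
  -- ===== e2 : bound for Lu =====
  have F3 : formA0 D n₀ τ Lu Lu
      = (1/(n₀-1))*(∫ x in D, uτ x * lap Lu x) + (1/(n₀-1))*(∫ x in D, lap uτ x * Lu x)
        + 2*τ*(((1/(n₀-1))+1)*(∫ x in D, uτ x * Lu x)) := by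
    rw [hL.2 Lu hL.1, pull, pull, pull]
  have e2 : Real.sqrt (∫ x in D, lap Lu x ^ 2) ^ 2 + Real.sqrt (∫ x in D, Lu x ^ 2) ^ 2
      ≤ (2*(n₀-1)+2+4/τ^2) * ((1/(n₀-1))*(Real.sqrt (∫ x in D, uτ x ^ 2)
            * Real.sqrt (∫ x in D, lap Lu x ^ 2))
          + (1/(n₀-1))*(Real.sqrt (∫ x in D, lap uτ x ^ 2) * Real.sqrt (∫ x in D, Lu x ^ 2))
          + 2*τ*(((1/(n₀-1))+1)*(Real.sqrt (∫ x in D, uτ x ^ 2)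
            * Real.sqrt (∫ x in D, Lu x ^ 2)))) := by
    rw [Real.sq_sqrt (inn _), Real.sq_sqrt (inn _)]
    refine (coerc (σ := τ) hDb hL.1.1 hn hτ (by linarith)).trans (mul_le_mul_of_nonneg_left ?_ hK.le)
    rw [F3]
    have b1 := (le_abs_self _).trans (cs hDb cuτ clLu)
    have b2 := (le_abs_self _).trans (cs hDb cluτ cLu)
    have b3 := (le_abs_self _).trans (cs hDb cuτ cLu)
    have t1 := mul_le_mul_of_nonneg_left b1 ha.le
    have t2 := mul_le_mul_of_nonneg_left b2 ha.le
    have t3 := mul_le_mul_of_nonneg_left (mul_le_mul_of_nonneg_left b3 hcc.le)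
      (by linarith : (0:ℝ) ≤ 2*τ)
    linarith
  -- ===== the key identity =====
  have d1 : (∫ x in D, lap w x * lap w x)
      = 1*(∫ x in D, lap uτh x * lap w x) + (-1)*(∫ x in D, lap uτ x * lap w x)
        + h*(∫ x in D, lap Lu x * lap w x) := by
    rw [← atom_lin hDb cluτh cluτ clLu clw 1 (-1) h]
    exact integral_congr_ae (.of_forall fun x => congrArg (· * lap w x) (congrFun hlapw x))
  have d2 : (∫ x in D, w x * lap w x)
      = 1*(∫ x in D, uτh x * lap w x) + (-1)*(∫ x in D, uτ x * lap w x)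
        + h*(∫ x in D, Lu x * lap w x) := by
    rw [← atom_lin hDb cuτh cuτ cLu clw 1 (-1) h]
    exact integral_congr_ae (.of_forall fun x => congrArg (· * lap w x) (congrFun hwfun x))
  have d3 : (∫ x in D, lap w x * w x)
      = 1*(∫ x in D, lap uτh x * w x) + (-1)*(∫ x in D, lap uτ x * w x)
        + h*(∫ x in D, lap Lu x * w x) := by
    rw [← atom_lin hDb cluτh cluτ clLu cw 1 (-1) h]
    exact integral_congr_ae (.of_forall fun x => congrArg (· * w x) (congrFun hlapw x))
  have d4 : (∫ x in D, w x * w x)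
      = 1*(∫ x in D, uτh x * w x) + (-1)*(∫ x in D, uτ x * w x)
        + h*(∫ x in D, Lu x * w x) := by
    rw [← atom_lin hDb cuτh cuτ cLu cw 1 (-1) h]
    exact integral_congr_ae (.of_forall fun x => congrArg (· * w x) (congrFun hwfun x))
  have F3w : formA0 D n₀ τ Lu w
      = (1/(n₀-1))*(∫ x in D, uτ x * lap w x) + (1/(n₀-1))*(∫ x in D, lap uτ x * w x)
        + 2*τ*(((1/(n₀-1))+1)*(∫ x in D, uτ x * w x)) := by
    rw [hL.2 w hmw, pull, pull, pull]
  have E1 := (formA0_expand hDb hRh.1.1 hmw.1 n₀ (τ+h)).symm.trans (hRh.2 w hmw)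
  have E2 := (formA0_expand hDb hR.1.1 hmw.1 n₀ τ).symm.trans (hR.2 w hmw)
  have E3 := (formA0_expand hDb hL.1.1 hmw.1 n₀ τ).symm.trans F3w
  have hKey : formA0 D n₀ (τ+h) w w
      = h^2*( (1/(n₀-1))*(∫ x in D, Lu x * lap w x) + (1/(n₀-1))*(∫ x in D, lap Lu x * w x)
        + 2*τ*(((1/(n₀-1))+1)*(∫ x in D, Lu x * w x))
        - ((1/(n₀-1))+1)*(∫ x in D, uτ x * w x)
        + h*(((1/(n₀-1))+1)*(∫ x in D, Lu x * w x)) ) := by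
    rw [formA0_expand hDb hmw.1 hmw.1 n₀ (τ+h), d1, d2, d3, d4]
    linear_combination E1 - E2 + h*E3
  -- ===== e3 =====
  have bc2 := cs hDb cLu clw
  have bc3 := cs hDb clLu cw
  have bc4 := cs hDb cLu cw
  have bb4 := cs hDb cuτ cw
  have hRb : (1/(n₀-1))*(∫ x in D, Lu x * lap w x) + (1/(n₀-1))*(∫ x in D, lap Lu x * w x)
        + 2*τ*(((1/(n₀-1))+1)*(∫ x in D, Lu x * w x))
        - ((1/(n₀-1))+1)*(∫ x in D, uτ x * w x)
        + h*(((1/(n₀-1))+1)*(∫ x in D, Lu x * w x))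
      ≤ (1/(n₀-1))*(Real.sqrt (∫ x in D, Lu x ^ 2) * Real.sqrt (∫ x in D, lap w x ^ 2))
        + (1/(n₀-1))*(Real.sqrt (∫ x in D, lap Lu x ^ 2) * Real.sqrt (∫ x in D, w x ^ 2))
        + 2*τ*(((1/(n₀-1))+1)*(Real.sqrt (∫ x in D, Lu x ^ 2) * Real.sqrt (∫ x in D, w x ^ 2)))
        + ((1/(n₀-1))+1)*(Real.sqrt (∫ x in D, uτ x ^ 2) * Real.sqrt (∫ x in D, w x ^ 2))
        + ((1/(n₀-1))+1)*(Real.sqrt (∫ x in D, Lu x ^ 2) * Real.sqrt (∫ x in D, w x ^ 2)) := by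
    have t1 := mul_le_mul_of_nonneg_left ((le_abs_self _).trans bc2) ha.le
    have t2 := mul_le_mul_of_nonneg_left ((le_abs_self _).trans bc3) ha.le
    have t3 := mul_le_mul_of_nonneg_left
      (mul_le_mul_of_nonneg_left ((le_abs_self _).trans bc4) hcc.le) (by linarith : (0:ℝ) ≤ 2*τ)
    have t4 := mul_le_mul_of_nonneg_left ((neg_le_abs _).trans bb4) hcc.le
    have t5 : h*(((1/(n₀-1))+1)*(∫ x in D, Lu x * w x))
        ≤ ((1/(n₀-1))+1)*(Real.sqrt (∫ x in D, Lu x ^ 2) * Real.sqrt (∫ x in D, w x ^ 2)) := by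
      have habs : h*(((1/(n₀-1))+1)*(∫ x in D, Lu x * w x))
          ≤ |h| * (((1/(n₀-1))+1)*|∫ x in D, Lu x * w x|) := by
        calc h*(((1/(n₀-1))+1)*(∫ x in D, Lu x * w x))
            ≤ |h*(((1/(n₀-1))+1)*(∫ x in D, Lu x * w x))| := le_abs_self _
          _ = |h| * (((1/(n₀-1))+1)*|∫ x in D, Lu x * w x|) := by
              rw [abs_mul, abs_mul, abs_of_nonneg hcc.le]
      refine habs.trans ?_
      calc |h| * (((1/(n₀-1))+1)*|∫ x in D, Lu x * w x|)
          ≤ 1 * (((1/(n₀-1))+1)*(Real.sqrt (∫ x in D, Lu x ^ 2)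
              * Real.sqrt (∫ x in D, w x ^ 2))) := by
            refine mul_le_mul hh1 (mul_le_mul_of_nonneg_left bc4 hcc.le)
              (by positivity) zero_le_one
        _ = ((1/(n₀-1))+1)*(Real.sqrt (∫ x in D, Lu x ^ 2)
              * Real.sqrt (∫ x in D, w x ^ 2)) := one_mul _
    linarith [t1, t2, t3, t4, t5]
  have e3 : Real.sqrt (∫ x in D, lap w x ^ 2) ^ 2 + Real.sqrt (∫ x in D, w x ^ 2) ^ 2
      ≤ (2*(n₀-1)+2+4/τ^2) * (h^2*((1/(n₀-1))*(Real.sqrt (∫ x in D, Lu x ^ 2)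
            * Real.sqrt (∫ x in D, lap w x ^ 2))
          + (1/(n₀-1))*(Real.sqrt (∫ x in D, lap Lu x ^ 2) * Real.sqrt (∫ x in D, w x ^ 2))
          + 2*τ*(((1/(n₀-1))+1)*(Real.sqrt (∫ x in D, Lu x ^ 2)
            * Real.sqrt (∫ x in D, w x ^ 2)))
          + ((1/(n₀-1))+1)*(Real.sqrt (∫ x in D, uτ x ^ 2) * Real.sqrt (∫ x in D, w x ^ 2))
          + ((1/(n₀-1))+1)*(Real.sqrt (∫ x in D, Lu x ^ 2)
            * Real.sqrt (∫ x in D, w x ^ 2)))) := by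
    rw [Real.sq_sqrt (inn _), Real.sq_sqrt (inn _)]
    refine (coerc hDb hmw.1 hn hτ hσ').trans (mul_le_mul_of_nonneg_left ?_ hK.le)
    rw [hKey]
    exact mul_le_mul_of_nonneg_left hRb (sq_nonneg h)
  -- ===== conclusion =====
  show Real.sqrt (∫ x in D, lap w x ^ 2)
      ≤ Cst (1/(n₀-1)) ((1/(n₀-1))+1) (2*(n₀-1)+2+4/τ^2) τ * h^2
          * Real.sqrt (∫ x in D, lap u x ^ 2)
  exact final_arith (1/(n₀-1)) ((1/(n₀-1))+1) (2*(n₀-1)+2+4/τ^2) τ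
    (Real.sqrt (∫ x in D, lap u x ^ 2)) (Real.sqrt (∫ x in D, uτ x ^ 2))
    (Real.sqrt (∫ x in D, lap uτ x ^ 2)) (Real.sqrt (∫ x in D, lap Lu x ^ 2))
    (Real.sqrt (∫ x in D, Lu x ^ 2)) (Real.sqrt (∫ x in D, lap w x ^ 2))
    (Real.sqrt (∫ x in D, w x ^ 2)) h ha hcc hK hτ (Real.sqrt_nonneg _) (Real.sqrt_nonneg _)
    (Real.sqrt_nonneg _) (Real.sqrt_nonneg _) (Real.sqrt_nonneg _) (Real.sqrt_nonneg _)
    (Real.sqrt_nonneg _) hh1 e1 e2 e3
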